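/- For any ideal I on ω the following are equivalent: (a) there exists a bi-I-invariant injection f : ω → ω with fix(f) ∉ I* (i.e., I does not satisfy condition (C1)); (b) there exist A, B ⊆ ω such that the symmetric difference A △ B ∉ I and I|A ≅ I|B. -/

import Mathlib

open Set Filter

/-- `I` is an ideal on the countable set `X`: closed under subsets and finite
unions, contains all finite sets, and does not contain the whole set. -/
def IsIdeal {X : Type*} (I : Set (Set X)) : Prop :=
  (∀ A B : Set X, A ∈ I → B ⊆ A → B ∈ I) ∧
  (∀ A B : Set X, A ∈ I → B ∈ I → A ∪ B ∈ I) ∧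
  (∀ A : Set X, A.Finite → A ∈ I) ∧
  (Set.univ : Set X) ∉ I

/-- The restriction `I|A = {B ∩ A : B ∈ I}`. -/
def restr {X : Type*} (I : Set (Set X)) (A : Set X) : Set (Set X) :=
  {C | ∃ B ∈ I, C = B ∩ A}

/-- `I|A ≅ I|B`: there is a bijection `f : B → A` such that for every
`C ⊆ A`, `C ∈ I|A ↔ f⁻¹[C] ∈ I|B`. -/
def RIso {X : Type*} (I : Set (Set X)) (A B : Set X) : Prop :=
  ∃ f : X → X, Set.BijOn f B A ∧
    ∀ C : Set X, C ⊆ A → (C ∈ restr I A ↔ B ∩ f ⁻¹' C ∈ restr I B)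

/-- The homogeneity family `H(I) = {A : I|A ≅ I}`. -/
def HF {X : Type*} (I : Set (Set X)) : Set (Set X) := {A | RIso I A Set.univ}

/-- `I` is homogeneous if `H(I) = I⁺`. -/
def HomogIdeal {X : Type*} (I : Set (Set X)) : Prop := HF I = {A | A ∉ I}

/-- `I` is anti-homogeneous if `H(I) = I*`. -/
def AntiHomogIdeal {X : Type*} (I : Set (Set X)) : Prop := HF I = {A | Aᶜ ∈ I}

/-- `I ≅ J`: a bijection `f` of underlying sets with `A ∈ I ↔ f⁻¹[A] ∈ J`. -/
def Isomorphic {X Y : Type*} (I : Set (Set X)) (J : Set (Set Y)) : Prop :=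
  ∃ f : Y → X, Function.Bijective f ∧ ∀ A : Set X, A ∈ I ↔ f ⁻¹' A ∈ J

/-- The ideal `Fin ⊕ P(ω)` on `{0,1} × ω` (here `Bool × ℕ`, `true` playing the
role of `1`): all sets `A` with `{n : (1,n) ∈ A}` finite. -/
def FinOplusAll : Set (Set (Bool × ℕ)) := {A | {n : ℕ | (true, n) ∈ A}.Finite}

/-- An ideal on `ω` is admissible if it is not isomorphic to `Fin ⊕ P(ω)`. -/
def Admissible (I : Set (Set ℕ)) : Prop := ¬ Isomorphic I FinOplusAll

/-- An injection `f` is bi-`I`-invariant if `f[A] ∈ I ↔ A ∈ I` for all `A`. -/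
def BiInvariant {X : Type*} (I : Set (Set X)) (f : X → X) : Prop :=
  Function.Injective f ∧ ∀ A : Set X, f '' A ∈ I ↔ A ∈ I

/-- The set of fixed points of `f`. -/
def fixedSet {X : Type*} (f : X → X) : Set X := {x | f x = x}

/-- `I` is a maximal ideal. -/
def MaximalIdeal {X : Type*} (I : Set (Set X)) : Prop :=
  IsIdeal I ∧ ∀ A : Set X, A ∈ I ∨ Aᶜ ∈ I

/-!
A non-fixed point `x` of an injection `f` has at most two neighbours `f x`, `f⁻¹ x` in the
graph of `f`, so a greedy colouring splits the non-fixed points into three pieces, each disjoint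
from its image; one piece `E` is `I`-positive, and `f : E → f[E]` witnesses `I|f[E] ≅ I|E`.
Conversely, if `g : B → A` witnesses `I|A ≅ I|B` and (after swapping `A` and `B`) `B \ A` is
`I`-positive, then `B \ A` is disjoint from its image under `g`, and the involution exchanging
`B \ A` with `g[B \ A]` along `g` is bi-`I`-invariant and moves every point of `B \ A`.
-/

namespace IsIdeal

variable {X : Type*} {I : Set (Set X)}

theorem mem_of_subset (hI : IsIdeal I) {A B : Set X} (hA : A ∈ I) (hBA : B ⊆ A) : B ∈ I :=
  hI.1 A B hA hBA

theorem union_mem (hI : IsIdeal I) {A B : Set X} (hA : A ∈ I) (hB : B ∈ I) : A ∪ B ∈ I :=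
  hI.2.1 A B hA hB

theorem biUnion_mem {ι : Type*} (hI : IsIdeal I) (s : Finset ι) {t : ι → Set X}
    (ht : ∀ i ∈ s, t i ∈ I) : ⋃ i ∈ s, t i ∈ I := by
  classical
  induction s using Finset.induction_on with
  | empty => simpa using hI.2.2.1 ∅ finite_empty
  | insert a s _ ih =>
    rw [Finset.set_biUnion_insert]
    exact hI.union_mem (ht a (Finset.mem_insert_self a s))
      (ih fun i hi => ht i (Finset.mem_insert_of_mem hi))

theorem exists_inter_preimage_singleton_notMem (hI : IsIdeal I) {D : Set X} (hD : D ∉ I)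
    (c : X → ℕ) {k : ℕ} (hc : ∀ x, c x ≤ k) : ∃ i, D ∩ c ⁻¹' {i} ∉ I := by
  by_contra! h
  refine hD (hI.mem_of_subset (hI.biUnion_mem (Finset.range (k + 1)) fun i _ => h i) ?_)
  intro x hx
  exact mem_biUnion (Finset.mem_coe.2 (Finset.mem_range.2 (Nat.lt_succ_of_le (hc x))))
    ⟨hx, rfl⟩

theorem mem_restr_iff (hI : IsIdeal I) {A C : Set X} (hCA : C ⊆ A) :
    C ∈ restr I A ↔ C ∈ I := by
  constructor
  · rintro ⟨B, hB, rfl⟩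
    exact hI.mem_of_subset hB inter_subset_left
  · exact fun hC => ⟨C, hC, (inter_eq_left.2 hCA).symm⟩

end IsIdeal

section RIso

open Function

variable {X : Type*} {I : Set (Set X)}

theorem rIso_iff (hI : IsIdeal I) {A B : Set X} :
    RIso I A B ↔ ∃ g : X → X, BijOn g B A ∧ ∀ S ⊆ B, (g '' S ∈ I ↔ S ∈ I) := by
  refine exists_congr fun g => and_congr_right fun hg => ⟨fun h S hS => ?_, fun h C hC => ?_⟩
  · have hS' : B ∩ g ⁻¹' (g '' S) = S := by
      rw [inter_comm]; exact hg.injOn.preimage_image_inter hS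
    have := h (g '' S) ((image_mono hS).trans hg.mapsTo.image_subset)
    rwa [hS', hI.mem_restr_iff ((image_mono hS).trans hg.mapsTo.image_subset),
      hI.mem_restr_iff hS] at this
  · have hC' : g '' (B ∩ g ⁻¹' C) = C := by
      rw [image_inter_preimage, hg.image_eq, inter_eq_right.2 hC]
    rw [hI.mem_restr_iff hC, hI.mem_restr_iff inter_subset_left, ← h _ inter_subset_left, hC']

theorem RIso.symm [Nonempty X] (hI : IsIdeal I) {A B : Set X} (h : RIso I A B) :
    RIso I B A := by
  obtain ⟨g, hg, hgI⟩ := (rIso_iff hI).1 h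
  refine (rIso_iff hI).2 ⟨invFunOn g B, hg.symm hg.invOn_invFunOn.symm, fun S hS => ?_⟩
  have hSB : invFunOn g B '' S ⊆ B := hg.surjOn.mapsTo_invFunOn.image_subset.trans' (image_mono hS)
  rw [← hgI _ hSB, hg.surjOn.image_invFunOn_image_of_subset hS]

end RIso

section Swap

open Function

variable {X : Type*} [Nonempty X] {g : X → X} {E : Set X} {x : X}

open Classical in
noncomputable def swapOn (g : X → X) (E : Set X) (x : X) : X :=
  if x ∈ E then g x else if x ∈ g '' E then invFunOn g E x else x

theorem swapOn_of_mem (hx : x ∈ E) : swapOn g E x = g x := by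
  simp [swapOn, hx]

theorem swapOn_apply_of_mem (hg : InjOn g E) (hd : Disjoint E (g '' E)) (hx : x ∈ E) :
    swapOn g E (g x) = x := by
  have hgx : g x ∉ E := disjoint_right.1 hd (mem_image_of_mem g hx)
  simp only [swapOn, hgx, if_false, mem_image_of_mem g hx, if_true]
  exact hg.leftInvOn_invFunOn hx

theorem swapOn_of_notMem (h₁ : x ∉ E) (h₂ : x ∉ g '' E) : swapOn g E x = x := by
  simp [swapOn, h₁, h₂]

theorem involutive_swapOn (hg : InjOn g E) (hd : Disjoint E (g '' E)) : Involutive (swapOn g E) := by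
  intro x
  by_cases hx : x ∈ E
  · rw [swapOn_of_mem hx, swapOn_apply_of_mem hg hd hx]
  by_cases hx' : x ∈ g '' E
  · obtain ⟨y, hy, rfl⟩ := hx'
    rw [swapOn_apply_of_mem hg hd hy, swapOn_of_mem hy]
  · rw [swapOn_of_notMem hx hx', swapOn_of_notMem hx hx']

theorem image_swapOn_subset (hg : InjOn g E) (hd : Disjoint E (g '' E)) (S : Set X) :
    swapOn g E '' S ⊆ g '' (S ∩ E) ∪ {y ∈ E | g y ∈ S} ∪ S := by
  rintro _ ⟨x, hxS, rfl⟩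
  by_cases hx : x ∈ E
  · exact Or.inl (Or.inl ⟨x, ⟨hxS, hx⟩, (swapOn_of_mem hx).symm⟩)
  by_cases hx' : x ∈ g '' E
  · obtain ⟨y, hy, rfl⟩ := hx'
    rw [swapOn_apply_of_mem hg hd hy]
    exact Or.inl (Or.inr ⟨hy, hxS⟩)
  · rw [swapOn_of_notMem hx hx']
    exact Or.inr hxS

end Swap

section BiInvariant

variable {X : Type*} {I : Set (Set X)}

theorem biInvariant_of_involutive {f : X → X} (hf : Function.Involutive f)
    (h : ∀ S ∈ I, f '' S ∈ I) : BiInvariant I f :=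
  ⟨hf.injective, fun S => ⟨fun hS => by simpa only [image_image, hf _, image_id'] using h _ hS,
    h S⟩⟩

variable [Nonempty X] {g : X → X} {E : Set X}

theorem biInvariant_swapOn (hI : IsIdeal I) (hg : InjOn g E) (hd : Disjoint E (g '' E))
    (hgI : ∀ S ⊆ E, (g '' S ∈ I ↔ S ∈ I)) : BiInvariant I (swapOn g E) := by
  refine biInvariant_of_involutive (involutive_swapOn hg hd) fun S hS => ?_
  have h₁ : g '' (S ∩ E) ∈ I :=
    (hgI _ inter_subset_right).2 (hI.mem_of_subset hS inter_subset_left)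
  have h₂ : {y ∈ E | g y ∈ S} ∈ I := by
    refine (hgI _ (sep_subset _ _)).1 (hI.mem_of_subset hS ?_)
    rintro _ ⟨y, hy, rfl⟩
    exact hy.2
  exact hI.mem_of_subset (hI.union_mem (hI.union_mem h₁ h₂) hS) (image_swapOn_subset hg hd S)

theorem subset_compl_fixedSet_swapOn (hd : Disjoint E (g '' E)) :
    E ⊆ (fixedSet (swapOn g E))ᶜ := by
  intro x hx hfix
  have hgx : g x = x := (swapOn_of_mem hx).symm.trans hfix
  exact disjoint_left.1 hd hx ⟨x, hx, hgx⟩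

theorem exists_biInvariant_of_rIso (hI : IsIdeal I) {A B : Set X} (h : RIso I A B)
    (hBA : B \ A ∉ I) : ∃ f : X → X, BiInvariant I f ∧ (fixedSet f)ᶜ ∉ I := by
  obtain ⟨g, hg, hgI⟩ := (rIso_iff hI).1 h
  have hd : Disjoint (B \ A) (g '' (B \ A)) :=
    disjoint_sdiff_left.mono_right ((image_mono sdiff_subset).trans hg.mapsTo.image_subset)
  refine ⟨swapOn g (B \ A), biInvariant_swapOn hI (hg.injOn.mono sdiff_subset) hd
    fun S hS => hgI S (hS.trans sdiff_subset), fun hfix => hBA ?_⟩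
  exact hI.mem_of_subset hfix (subset_compl_fixedSet_swapOn hd)

end BiInvariant

section GreedyColoring

/-- Colour `n` with the least colour not used by its neighbours `m ∈ nb n` with `m < n`. -/
noncomputable def greedyColoring (nb : ℕ → Finset ℕ) (n : ℕ) : ℕ :=
  sInf (↑(((nb n).filter (· < n)).attach.image fun m => greedyColoring nb m.1) : Set ℕ)ᶜ
termination_by n
decreasing_by exact (Finset.mem_filter.1 m.2).2

theorem greedyColoring_notMem (nb : ℕ → Finset ℕ) (n : ℕ) :
    greedyColoring nb n ∉ ((nb n).filter (· < n)).attach.image fun m => greedyColoring nb m.1 := by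
  rw [greedyColoring]
  exact Nat.sInf_mem (Finset.finite_toSet _).infinite_compl.nonempty

theorem greedyColoring_le_card (nb : ℕ → Finset ℕ) (n : ℕ) :
    greedyColoring nb n ≤ (nb n).card := by
  set used := ((nb n).filter (· < n)).attach.image fun m => greedyColoring nb m.1
  have hused : used.card < (Finset.range ((nb n).card + 1)).card := by
    calc used.card ≤ ((nb n).filter (· < n)).attach.card := Finset.card_image_le
      _ ≤ (nb n).card := by simpa using Finset.card_filter_le _ _
      _ < _ := by simp
  obtain ⟨k, hk, hkused⟩ := Finset.exists_mem_notMem_of_card_lt_card hused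
  rw [greedyColoring]
  exact (Nat.sInf_le hkused).trans (Nat.lt_succ_iff.1 (Finset.mem_range.1 hk))

theorem greedyColoring_ne (nb : ℕ → Finset ℕ) {m n : ℕ} (hmn : m < n) (hm : m ∈ nb n) :
    greedyColoring nb m ≠ greedyColoring nb n := fun h =>
  greedyColoring_notMem nb n <| h ▸ Finset.mem_image.2
    ⟨⟨m, Finset.mem_filter.2 ⟨hm, hmn⟩⟩, Finset.mem_attach _ _, rfl⟩

theorem exists_coloring_ne_apply {f : ℕ → ℕ} (hf : Function.Injective f) :
    ∃ c : ℕ → ℕ, (∀ n, c n ≤ 2) ∧ ∀ x, f x ≠ x → c x ≠ c (f x) := by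
  set nb : ℕ → Finset ℕ := fun n => insert (f n) (({n} : Finset ℕ).preimage f hf.injOn)
  refine ⟨greedyColoring nb, fun n => (greedyColoring_le_card nb n).trans ?_, fun x hx => ?_⟩
  · refine (Finset.card_insert_le _ _).trans (Nat.succ_le_succ (Finset.card_le_one.2 ?_))
    intro a ha b hb
    simp only [Finset.mem_preimage, Finset.mem_singleton] at ha hb
    exact hf (ha.trans hb.symm)
  rcases hx.lt_or_gt with h | h
  · exact (greedyColoring_ne nb h (Finset.mem_insert_self _ _)).symm
  · exact greedyColoring_ne nb h (Finset.mem_insert_of_mem (by simp))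

end GreedyColoring

theorem exists_notMem_disjoint_image {I : Set (Set ℕ)} (hI : IsIdeal I) {f : ℕ → ℕ}
    (hf : Function.Injective f) (hfix : (fixedSet f)ᶜ ∉ I) :
    ∃ E : Set ℕ, E ∉ I ∧ Disjoint E (f '' E) := by
  obtain ⟨c, hc, hcf⟩ := exists_coloring_ne_apply hf
  obtain ⟨i, hi⟩ := hI.exists_inter_preimage_singleton_notMem hfix c hc
  refine ⟨_, hi, disjoint_left.2 ?_⟩
  rintro _ ⟨-, hyc⟩ ⟨x, ⟨hx, hxc⟩, rfl⟩
  exact hcf x hx (hxc.trans hyc.symm)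

/-- `I` fails condition (C1) iff there are `A, B` with
`A △ B ∉ I` and `I|A ≅ I|B`. -/
theorem stmt_9 (I : Set (Set ℕ)) (hI : IsIdeal I) :
    (∃ f : ℕ → ℕ, BiInvariant I f ∧ (fixedSet f)ᶜ ∉ I) ↔
    (∃ A B : Set ℕ, symmDiff A B ∉ I ∧ RIso I A B) := by
  constructor
  · rintro ⟨f, hf, hfix⟩
    obtain ⟨E, hE, hd⟩ := exists_notMem_disjoint_image hI hf.1 hfix
    have hEsub : E ⊆ symmDiff (f '' E) E := fun x hx => Or.inr ⟨hx, disjoint_left.1 hd hx⟩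
    exact ⟨f '' E, E, fun h => hE (hI.mem_of_subset h hEsub),
      (rIso_iff hI).2 ⟨f, hf.1.injOn.bijOn_image, fun S _ => hf.2 S⟩⟩
  · rintro ⟨A, B, hAB, h⟩
    by_cases hBA : B \ A ∈ I
    · exact exists_biInvariant_of_rIso hI (h.symm hI) fun hAB' => hAB (hI.union_mem hAB' hBA)
    · exact exists_biInvariant_of_rIso hI h hBA
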